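/- arXiv:2508.16137 — 5 statements merged into one kernel-verified Lean document; each statement's English description precedes it below -/
import Mathlib

section
/- Let R be a commutative noetherian ring and suppose 0 → P → A → B → 0 is a short exact sequence of finitely generated R-modules with P a finitely generated projective R-module. Then the stable annihilator of B is contained in the stable annihilator of A. -/
/-!
Write `a • id_B = v ∘ u` with `u : B → Q`, `v : Q → B`, `Q` finitely generated projective. Lifting
`v` along `g` to `w : Q → A`, the map `a • id_A - w ∘ u ∘ g` is killed by `g`, so it factors
through `f` as `f ∘ h`. Then `a • id_A = f ∘ h + w ∘ (u ∘ g)` factors through `P × Q`.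
-/

/-- `a` lies in the stable annihilator of `M`: multiplication by `a` on `M` factors
through a finitely generated projective `R`-module. -/
def StablyAnn (R : Type) [CommRing R] (M : Type) [AddCommGroup M] [Module R M] (a : R) : Prop :=
  ∃ (P : Type) (_ : AddCommGroup P) (_ : Module R P),
    Module.Finite R P ∧ Module.Projective R P ∧
    ∃ (f : M →ₗ[R] P) (g : P →ₗ[R] M), g ∘ₗ f = a • (LinearMap.id : M →ₗ[R] M)

theorem stablyAnn_of_add_eq_smul_id {R : Type} [CommRing R] {M P Q : Type}
    [AddCommGroup M] [Module R M] [AddCommGroup P] [Module R P] [AddCommGroup Q] [Module R Q]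
    [Module.Finite R P] [Module.Projective R P] [Module.Finite R Q] [Module.Projective R Q]
    {a : R} (f : P →ₗ[R] M) (h : M →ₗ[R] P) (w : Q →ₗ[R] M) (k : M →ₗ[R] Q)
    (hsum : f ∘ₗ h + w ∘ₗ k = a • LinearMap.id) : StablyAnn R M a :=
  ⟨P × Q, inferInstance, inferInstance, inferInstance, inferInstance, h.prod k, f.coprod w, by
    rw [LinearMap.coprod_comp_prod, hsum]⟩

theorem stablyAnn_le_of_proj_extension_general (R : Type) [CommRing R]
    (P A B : Type) [AddCommGroup P] [Module R P] [Module.Finite R P] [Module.Projective R P]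
    [AddCommGroup A] [Module R A]
    [AddCommGroup B] [Module R B]
    (f : P →ₗ[R] A) (g : A →ₗ[R] B) (hf : Function.Injective f) (hg : Function.Surjective g)
    (hfg : LinearMap.range f = LinearMap.ker g) :
    ∀ a : R, StablyAnn R B a → StablyAnn R A a := by
  rintro a ⟨Q, _, _, _, _, u, v, hvu⟩
  obtain ⟨w, hw⟩ := Module.projective_lifting_property g v hg
  set d : A →ₗ[R] A := a • LinearMap.id - w ∘ₗ u ∘ₗ g
  have hgd : g ∘ₗ d = 0 := by
    ext x
    have hx : g (w (u (g x))) = a • g x := by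
      rw [← LinearMap.comp_apply g w, hw, ← LinearMap.comp_apply v u, hvu]; rfl
    simp [d, hx]
  have hd : ∀ x, d x ∈ LinearMap.range f := fun x => by
    rw [hfg, LinearMap.mem_ker, ← LinearMap.comp_apply, hgd, LinearMap.zero_apply]
  refine stablyAnn_of_add_eq_smul_id f (d.codRestrictOfInjective f hf hd) w (u ∘ₗ g) ?_
  rw [LinearMap.codRestrictOfInjective_comp, sub_add_cancel]

/-- If 0 -> P -> A -> B -> 0 is exact with P finitely generated projective, then the stable annihilator of B is contained in that of A. -/
theorem stablyAnn_le_of_proj_extension (R : Type) [CommRing R] [IsNoetherianRing R]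
    (P A B : Type) [AddCommGroup P] [Module R P] [Module.Finite R P] [Module.Projective R P]
    [AddCommGroup A] [Module R A] [Module.Finite R A]
    [AddCommGroup B] [Module R B] [Module.Finite R B]
    (f : P →ₗ[R] A) (g : A →ₗ[R] B) (hf : Function.Injective f) (hg : Function.Surjective g)
    (hfg : LinearMap.range f = LinearMap.ker g) :
    ∀ a : R, StablyAnn R B a → StablyAnn R A a :=
  stablyAnn_le_of_proj_extension_general R P A B f g hf hg hfg
end

section
/- Let R be a commutative noetherian ring and M a finitely generated R-module. Then an element a ∈ R lies in the stable annihilator of M if and only if a annihilates Ext^i_R(M, N) for all i > 0 and all finitely generated R-modules N. -/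
open IsLocalRing

/-- The Ext module of two module-category objects. -/
noncomputable def ExtMod (R : Type) [CommRing R] (n : ℕ) (M N : ModuleCat.{0} R) : ModuleCat R :=
  ((Ext R (ModuleCat.{0} R) n).obj (Opposite.op M)).obj N

/-- K is an n-th syzygy of M: there is an exact sequence
0 → K → F_{n-1} → ... → F_0 → M → 0 with finitely generated free modules F_i. -/
def IsSyzygyCat (R : Type) [CommRing R] : ℕ → ModuleCat.{0} R → ModuleCat.{0} R → Prop
  | 0, K, M => Nonempty (K ≃ₗ[R] M)
  | n + 1, K, M =>
      ∃ (s : ℕ) (p : (Fin s → R) →ₗ[R] M), Function.Surjective p ∧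
        IsSyzygyCat R n K (ModuleCat.of R (LinearMap.ker p))

/-- M is a direct summand of Z. -/
def IsSummand (R : Type) [CommRing R] (M Z : ModuleCat.{0} R) : Prop :=
  ∃ (i : M →ₗ[R] Z) (p : Z →ₗ[R] M), p ∘ₗ i = LinearMap.id

/-- The class |X|_n of modules built from X by n-1 extensions together with
finite direct sums and direct summands. -/
def Ball (R : Type) [CommRing R] (X : ModuleCat.{0} R) : ℕ → ModuleCat.{0} R → Prop
  | 0, M => Subsingleton M
  | 1, M => ∃ s : ℕ, IsSummand R M (ModuleCat.of R (Fin s → X))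
  | (n + 2), M =>
      ∃ (A Z B : ModuleCat.{0} R) (f : A →ₗ[R] Z) (g : Z →ₗ[R] B),
        Function.Injective f ∧ Function.Surjective g ∧ LinearMap.range f = LinearMap.ker g ∧
        Ball R X (n + 1) A ∧ Ball R X 1 B ∧ IsSummand R M Z

/-! If `a • 𝟙 M` factors through a projective module, lift it to an endomorphism `γ` of `P₀` in a
projective resolution `P → M` with `d₁ ≫ γ = 0`. Projectivity and exactness then give, degree by
degree, a homotopy from `a • 𝟙 P` to `γ` extended by zero, so `a` turns every positive-degree
cocycle of `Hom(P, N)` into a coboundary.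

Conversely, for a presentation `0 → K → Rˢ → M → 0` the obstruction to lifting `a • 𝟙 M` along
`Rˢ → M` is `a` times the class of the extension in `Ext¹(M, K)`; over a noetherian ring `K` is
finitely generated, so this class is killed by `a`. -/

open CategoryTheory Limits

theorem CategoryTheory.ShortComplex.mem_annihilator_homology_iff {R : Type*} [Ring R]
    (S : ShortComplex (ModuleCat R)) (a : R) :
    a ∈ Module.annihilator R S.homology ↔
      ∀ c ∈ LinearMap.ker S.g.hom, a • c ∈ LinearMap.range S.f.hom := by
  rw [S.moduleCatHomologyIso.toLinearEquiv.annihilator_eq]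
  change a ∈ Module.annihilator R
    (LinearMap.ker S.g.hom ⧸ LinearMap.range S.moduleCatToCycles) ↔ _
  rw [Module.mem_annihilator]
  constructor
  · intro h c hc
    have hmk := h (Submodule.Quotient.mk ⟨c, hc⟩)
    rw [← Submodule.Quotient.mk_smul, Submodule.Quotient.mk_eq_zero] at hmk
    obtain ⟨b, hb⟩ := hmk
    exact ⟨b, congrArg Subtype.val hb⟩
  · intro h x
    obtain ⟨⟨c, hc⟩, rfl⟩ := Submodule.Quotient.mk_surjective _ x
    obtain ⟨b, hb⟩ := h c hc
    rw [← Submodule.Quotient.mk_smul, Submodule.Quotient.mk_eq_zero]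
    exact ⟨b, Subtype.ext hb⟩

namespace CategoryTheory.ProjectiveResolution

variable {C : Type*} [Category C] [Abelian C] {X : C} (P : ProjectiveResolution X)

/-- `P.π.f 0` with its codomain `((single₀ C).obj X).X 0` written as `X`: the two are only
definitionally equal, which defeats rewriting in composites `P.π.f 0 ≫ f` with `f : X ⟶ Y`. -/
noncomputable def augmentation : P.complex.X 0 ⟶ X :=
  P.π.f 0 ≫ (HomologicalComplex.singleObjXSelf (ComplexShape.down ℕ) 0 X).hom

instance : Epi P.augmentation := by
  unfold augmentation
  infer_instance

theorem d_comp_augmentation : P.complex.d 1 0 ≫ P.augmentation = 0 := by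
  rw [augmentation, ← Category.assoc, complex_d_comp_π_f_zero, zero_comp]

theorem exists_comp_d_eq_of_comp_augmentation_eq_zero {Y : C} [Projective Y]
    (φ : Y ⟶ P.complex.X 0) (hφ : φ ≫ P.augmentation = 0) :
    ∃ h : Y ⟶ P.complex.X 1, h ≫ P.complex.d 1 0 = φ := by
  have hφ' : φ ≫ P.π.f 0 = 0 := by
    simpa only [augmentation, Category.assoc, Iso.hom_inv_id, Category.comp_id, zero_comp]
      using hφ =≫ (HomologicalComplex.singleObjXSelf (ComplexShape.down ℕ) 0 X).inv
  exact ⟨_, P.exact₀.liftFromProjective_comp φ hφ'⟩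

theorem exists_comp_d_eq_of_comp_d_eq_zero {Y : C} [Projective Y] {n : ℕ}
    (φ : Y ⟶ P.complex.X (n + 1)) (hφ : φ ≫ P.complex.d (n + 1) n = 0) :
    ∃ h : Y ⟶ P.complex.X (n + 2), h ≫ P.complex.d (n + 2) (n + 1) = φ :=
  ⟨_, (P.exact_succ n).liftFromProjective_comp φ hφ⟩

theorem exists_augmentation_comp_eq {F : C} (θ : P.complex.X 0 ⟶ F)
    (hθ : P.complex.d 1 0 ≫ θ = 0) : ∃ ψ : X ⟶ F, P.augmentation ≫ ψ = θ := by
  refine ⟨(HomologicalComplex.singleObjXSelf (ComplexShape.down ℕ) 0 X).inv ≫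
    P.exact₀.desc θ hθ, ?_⟩
  rw [augmentation, Category.assoc, Iso.hom_inv_id_assoc]
  exact P.exact₀.g_desc θ hθ

variable {R : Type*} [Ring R] [Linear R C]

theorem mem_annihilator_ext_succ_iff [EnoughProjectives C] (N : C) (n : ℕ) (a : R) :
    a ∈ Module.annihilator R (((Ext R C (n + 1)).obj (Opposite.op X)).obj N) ↔
      ∀ c : P.complex.X (n + 1) ⟶ N, P.complex.d (n + 2) (n + 1) ≫ c = 0 →
        ∃ b : P.complex.X n ⟶ N, P.complex.d (n + 1) n ≫ b = a • c := by
  let K := P.complex.linearYonedaObj R N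
  rw [(P.isoExt (n + 1) N ≪≫ K.homologyIsoSc' n (n + 1) (n + 2) (by simp)
    (by simp [CochainComplex.next])).toLinearEquiv.annihilator_eq,
    ShortComplex.mem_annihilator_homology_iff]
  rfl

theorem exists_smul_id_sub_d_comp_comp_d_eq_zero {a : R} {γ : P.complex.X 0 ⟶ P.complex.X 0}
    (hγ : γ ≫ P.augmentation = a • P.augmentation) (hγd : P.complex.d 1 0 ≫ γ = 0) (n : ℕ) :
    ∃ h : P.complex.X n ⟶ P.complex.X (n + 1),
      (a • 𝟙 _ - P.complex.d (n + 1) n ≫ h) ≫ P.complex.d (n + 1) n = 0 := by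
  induction n with
  | zero =>
    obtain ⟨h, hh⟩ := P.exists_comp_d_eq_of_comp_augmentation_eq_zero (a • 𝟙 _ - γ)
      (by simp [hγ])
    exact ⟨h, by simp [hh, hγd]⟩
  | succ n ih =>
    obtain ⟨h, hh⟩ := ih
    obtain ⟨h', hh'⟩ := P.exists_comp_d_eq_of_comp_d_eq_zero _ hh
    exact ⟨h', by simp [hh']⟩

end CategoryTheory.ProjectiveResolution

section

variable {R : Type*} [Ring R] {C : Type*} [Category C] [Abelian C] [Linear R C]
  [EnoughProjectives C] {X : C} {a : R}

theorem mem_annihilator_ext_succ_of_comp_eq_smul_id {Q : C} [Projective Q] (f : X ⟶ Q)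
    (g : Q ⟶ X) (hfg : f ≫ g = a • 𝟙 X) (N : C) (n : ℕ) :
    a ∈ Module.annihilator R (((Ext R C (n + 1)).obj (Opposite.op X)).obj N) := by
  let P := ProjectiveResolution.of X
  let γ := P.augmentation ≫ f ≫ Projective.factorThru g P.augmentation
  obtain ⟨h, hh⟩ := P.exists_smul_id_sub_d_comp_comp_d_eq_zero (a := a) (γ := γ)
    (by simp [γ, hfg]) (by rw [← Category.assoc, P.d_comp_augmentation, zero_comp]) n
  obtain ⟨l, hl⟩ := P.exists_comp_d_eq_of_comp_d_eq_zero _ hh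
  rw [P.mem_annihilator_ext_succ_iff]
  intro c hc
  refine ⟨h ≫ c, ?_⟩
  calc P.complex.d (n + 1) n ≫ h ≫ c
      = (a • 𝟙 _ - (a • 𝟙 _ - P.complex.d (n + 1) n ≫ h)) ≫ c := by simp
    _ = a • c := by rw [← hl]; simp [hc]

theorem exists_comp_eq_smul_id_of_mem_annihilator_ext_one {F : C} (p : F ⟶ X) [Epi p]
    (ha : a ∈ Module.annihilator R (((Ext R C 1).obj (Opposite.op X)).obj (kernel p))) :
    ∃ ψ : X ⟶ F, ψ ≫ p = a • 𝟙 X := by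
  let P := ProjectiveResolution.of X
  let q := Projective.factorThru P.augmentation p
  -- a cocycle representing the class of the extension `0 → kernel p → F → X → 0`
  let μ := kernel.lift p (P.complex.d 1 0 ≫ q) (by simp [q, P.d_comp_augmentation])
  have hμ : P.complex.d 2 1 ≫ μ = 0 := by
    rw [← cancel_mono (kernel.ι p)]
    simp [μ]
  obtain ⟨b, hb⟩ := (P.mem_annihilator_ext_succ_iff (kernel p) 0 a).1 ha μ hμ
  obtain ⟨ψ, hψ⟩ := P.exists_augmentation_comp_eq (a • q - b ≫ kernel.ι p)
    (by simp [reassoc_of% hb, μ])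
  refine ⟨ψ, ?_⟩
  rw [← cancel_epi P.augmentation, ← Category.assoc, hψ]
  simp [q]

end

/-- a lies in the stable annihilator of M iff a annihilates Ext^i(M,N) for all i > 0
and all finitely generated N. -/
theorem stablyAnn_iff_ann_ext (R : Type) [CommRing R] [IsNoetherianRing R]
    (M : ModuleCat.{0} R) (hM : Module.Finite R M) (a : R) :
    StablyAnn R M a ↔
      ∀ i > 0, ∀ N : ModuleCat.{0} R, Module.Finite R N →
        ∀ x : ExtMod R i M N, a • x = 0 := by
  constructor
  · rintro ⟨Q, _, _, -, _, f, g, hfg⟩ i hi N -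
    obtain ⟨n, rfl⟩ := Nat.exists_eq_succ_of_ne_zero hi.ne'
    refine Module.mem_annihilator.1 <| mem_annihilator_ext_succ_of_comp_eq_smul_id
      (Q := ModuleCat.of R Q) (ModuleCat.ofHom f) (ModuleCat.ofHom g) ?_ N n
    ext x
    exact LinearMap.congr_fun hfg x
  · intro hann
    obtain ⟨s, p, hp⟩ := Module.Finite.exists_fin' R M
    let p' : ModuleCat.of R (Fin s → R) ⟶ M := ModuleCat.ofHom p
    have : Epi p' := (ModuleCat.epi_iff_surjective _).2 hp
    let K : ModuleCat R := kernel p'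
    have hK : Module.Finite R K := Module.Finite.of_injective (kernel.ι p').hom
      ((ModuleCat.mono_iff_injective _).1 inferInstance)
    obtain ⟨ψ, hψ⟩ := exists_comp_eq_smul_id_of_mem_annihilator_ext_one p'
      (Module.mem_annihilator.2 (hann 1 one_pos K hK))
    exact ⟨Fin s → R, _, _, inferInstance, inferInstance, ψ.hom, p, congrArg ModuleCat.Hom.hom hψ⟩
end

section
/- Let R be a commutative noetherian ring, M a finitely generated R-module, and Ω M a syzygy of M (i.e., there is an exact sequence 0 → Ω M → P → M → 0 with P finitely generated projective). Then the stable annihilator of M is contained in the stable annihilator of Ω M. -/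
open LinearMap

section

variable {R K P M Q : Type*} [CommRing R] [AddCommGroup K] [Module R K]
  [AddCommGroup P] [Module R P] [AddCommGroup M] [Module R M] [AddCommGroup Q] [Module R Q]
  {f : K →ₗ[R] P} {g : P →ₗ[R] M} {a : R}

theorem exists_comp_sub_smul_id_eq_zero_of_smul_id_eq_comp [Module.Projective R Q]
    (hg : Function.Surjective g) {s : M →ₗ[R] Q} {t : Q →ₗ[R] M}
    (hst : t ∘ₗ s = a • LinearMap.id) :
    ∃ u : Q →ₗ[R] P, g ∘ₗ (a • LinearMap.id - u ∘ₗ s ∘ₗ g) = 0 := by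
  obtain ⟨u, hu⟩ := Module.projective_lifting_property g t hg
  refine ⟨u, ?_⟩
  rw [comp_sub, ← comp_assoc, hu, ← comp_assoc, hst, comp_smul, smul_comp, comp_id, id_comp,
    sub_self]

theorem exists_comp_eq_smul_id_of_exact [Module.Projective R Q]
    (hf : Function.Injective f) (hg : Function.Surjective g) (hfg : Function.Exact f g)
    {s : M →ₗ[R] Q} {t : Q →ₗ[R] M} (hst : t ∘ₗ s = a • LinearMap.id) :
    ∃ h : P →ₗ[R] K, h ∘ₗ f = a • LinearMap.id := by
  obtain ⟨u, hu⟩ := exists_comp_sub_smul_id_eq_zero_of_smul_id_eq_comp hg hst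
  set φ : P →ₗ[R] P := a • LinearMap.id - u ∘ₗ s ∘ₗ g
  have hφ : ∀ x, φ x ∈ range f := fun x => (hfg (φ x)).mp congr($hu x)
  refine ⟨codRestrictOfInjective φ f hf hφ, ?_⟩
  ext k
  apply hf
  simp [φ, hfg.apply_apply_eq_zero]

end

theorem stablyAnn_le_stablyAnn_syzygy_general (R : Type) [CommRing R]
    (K P M : Type) [AddCommGroup K] [Module R K]
    [AddCommGroup P] [Module R P] [Module.Finite R P] [Module.Projective R P]
    [AddCommGroup M] [Module R M]
    (f : K →ₗ[R] P) (g : P →ₗ[R] M) (hf : Function.Injective f) (hg : Function.Surjective g)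
    (hfg : LinearMap.range f = LinearMap.ker g) :
    ∀ a : R, StablyAnn R M a → StablyAnn R K a := by
  rintro a ⟨Q, _, _, -, _, s, t, hst⟩
  obtain ⟨h, hh⟩ := exists_comp_eq_smul_id_of_exact hf hg (exact_iff.mpr hfg.symm) hst
  exact ⟨P, inferInstance, inferInstance, inferInstance, inferInstance, f, h, hh⟩

/-- The stable annihilator of M is contained in the stable annihilator of a syzygy of M. -/
theorem stablyAnn_le_stablyAnn_syzygy (R : Type) [CommRing R] [IsNoetherianRing R]
    (K P M : Type) [AddCommGroup K] [Module R K] [Module.Finite R K]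
    [AddCommGroup P] [Module R P] [Module.Finite R P] [Module.Projective R P]
    [AddCommGroup M] [Module R M] [Module.Finite R M]
    (f : K →ₗ[R] P) (g : P →ₗ[R] M) (hf : Function.Injective f) (hg : Function.Surjective g)
    (hfg : LinearMap.range f = LinearMap.ker g) :
    ∀ a : R, StablyAnn R M a → StablyAnn R K a :=
  stablyAnn_le_stablyAnn_syzygy_general R K P M f g hf hg hfg
end

section
/- Let R be a commutative noetherian ring, M a finitely generated R-module, and M* = Hom_R(M, R) its R-dual. Then the stable annihilator of M is contained in the stable annihilator of M*. -/
theorem StablyAnn.dual {R : Type} [CommRing R] {M : Type} [AddCommGroup M] [Module R M] {a : R}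
    (h : StablyAnn R M a) : StablyAnn R (Module.Dual R M) a := by
  obtain ⟨P, _, _, _, _, f, g, hgf⟩ := h
  refine ⟨Module.Dual R P, inferInstance, inferInstance, inferInstance, inferInstance,
    g.dualMap, f.dualMap, ?_⟩
  rw [LinearMap.dualMap_comp_dualMap, hgf, LinearMap.dualMap_def, map_smul,
    ← LinearMap.dualMap_def, LinearMap.dualMap_id]

theorem stablyAnn_le_stablyAnn_dual_general (R : Type) [CommRing R]
    (M : Type) [AddCommGroup M] [Module R M] :
    ∀ a : R, StablyAnn R M a → StablyAnn R (M →ₗ[R] R) a :=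
  fun _ h ↦ h.dual

/-- The stable annihilator of M is contained in the stable annihilator of the dual module Hom(M, R). -/
theorem stablyAnn_le_stablyAnn_dual (R : Type) [CommRing R] [IsNoetherianRing R]
    (M : Type) [AddCommGroup M] [Module R M] [Module.Finite R M] :
    ∀ a : R, StablyAnn R M a → StablyAnn R (M →ₗ[R] R) a :=
  stablyAnn_le_stablyAnn_dual_general R M
end

section
/- Let R be a commutative noetherian ring, I an ideal, and let X be a full subcategory of finitely generated R-modules containing all finitely generated projectives and closed under direct summands and extensions. If a finitely generated module A ⊕ A' admits an exact sequence 0 → A ⊕ A' → P → B → 0 with P finitely generated projective and B ∈ X with I ⊆ ann̲_R(B), then A admits an exact sequence 0 → A → P → C → 0 with P finitely generated projective and C ∈ X with I ⊆ ann̲_R(C). -/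
open IsLocalRing

/-! Write `K₁ = f(A × 0)` and `K₂ = f(0 × A')`, so that `K₁ ∩ K₂ = 0` and `K₁ + K₂ = ker g`. Then
`0 → P → P/K₁ × P/K₂ → B → 0` is exact. Its middle term lies in `X` by closure under extensions,
and since `P` is projective, every element stably annihilating `B` also stably annihilates it.
Both properties pass to its direct summand `P/K₁`, the cokernel of `A → P`. -/

theorem LinearMap.exists_comp_eq_of_range_le {R M Q Z : Type*} [Semiring R]
    [AddCommMonoid M] [Module R M] [AddCommMonoid Q] [Module R Q] [AddCommMonoid Z] [Module R Z]
    {δ : Q →ₗ[R] Z} (hδ : Function.Injective δ) {e : M →ₗ[R] Z}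
    (he : LinearMap.range e ≤ LinearMap.range δ) : ∃ h : M →ₗ[R] Q, δ ∘ₗ h = e := by
  refine ⟨(LinearEquiv.ofInjective δ hδ).symm ∘ₗ e.codRestrict _ fun x => he ⟨x, rfl⟩, ?_⟩
  ext x
  simp

namespace StablyAnn

variable {R : Type} [CommRing R] {a : R} {M N : Type} [AddCommGroup M] [Module R M]
  [AddCommGroup N] [Module R N]

theorem of_retract (i : M →ₗ[R] N) (p : N →ₗ[R] M) (hpi : p ∘ₗ i = LinearMap.id)
    (h : StablyAnn R N a) : StablyAnn R M a := by
  obtain ⟨Q, _, _, hQfin, hQproj, u, v, hvu⟩ := h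
  refine ⟨Q, inferInstance, inferInstance, hQfin, hQproj, u ∘ₗ i, p ∘ₗ v, ?_⟩
  calc p ∘ₗ v ∘ₗ u ∘ₗ i = p ∘ₗ (v ∘ₗ u) ∘ₗ i := rfl
    _ = a • (p ∘ₗ i) := by rw [hvu]; ext; simp
    _ = a • LinearMap.id := by rw [hpi]

theorem of_exact_of_projective {Q : Type} [AddCommGroup Q] [Module R Q] [Module.Finite R Q]
    [Module.Projective R Q] (δ : Q →ₗ[R] M) (σ : M →ₗ[R] N) (hδ : Function.Injective δ)
    (hσ : Function.Surjective σ) (hδσ : LinearMap.range δ = LinearMap.ker σ)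
    (h : StablyAnn R N a) : StablyAnn R M a := by
  obtain ⟨Q', _, _, hQ'fin, hQ'proj, u, v, hvu⟩ := h
  obtain ⟨v', hv'⟩ := Module.projective_lifting_property σ v hσ
  have hrange : LinearMap.range (a • LinearMap.id - v' ∘ₗ u ∘ₗ σ) ≤ LinearMap.range δ := by
    rintro _ ⟨x, rfl⟩
    rw [hδσ, LinearMap.mem_ker]
    have hσv' : σ (v' (u (σ x))) = a • σ x := by
      rw [← LinearMap.comp_apply σ v', hv', ← LinearMap.comp_apply v u, hvu]; rfl
    simp [hσv']
  obtain ⟨k, hk⟩ := LinearMap.exists_comp_eq_of_range_le hδ hrange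
  refine ⟨Q' × Q, inferInstance, inferInstance, inferInstance, inferInstance,
    (u ∘ₗ σ).prod k, v'.coprod δ, ?_⟩
  rw [LinearMap.coprod_comp_prod, hk]
  abel

end StablyAnn

namespace Submodule

variable {R P B : Type*} [Ring R] [AddCommGroup P] [Module R P] [AddCommGroup B] [Module R B]
  {K₁ K₂ : Submodule R P}

theorem injective_mkQ_prod_mkQ (h : Disjoint K₁ K₂) :
    Function.Injective (K₁.mkQ.prod K₂.mkQ) := by
  rw [← LinearMap.ker_eq_bot, LinearMap.ker_prod, ker_mkQ, ker_mkQ, ← disjoint_iff]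
  exact h

variable {g : P →ₗ[R] B} (h₁ : K₁ ≤ LinearMap.ker g) (h₂ : K₂ ≤ LinearMap.ker g)

theorem surjective_liftQ_coprod_neg_liftQ (hg : Function.Surjective g) :
    Function.Surjective ((K₁.liftQ g h₁).coprod (-K₂.liftQ g h₂)) := by
  intro b
  obtain ⟨p, rfl⟩ := hg b
  exact ⟨(K₁.mkQ p, 0), by simp⟩

theorem range_mkQ_prod_mkQ_eq_ker (hK : LinearMap.ker g ≤ K₁ ⊔ K₂) :
    LinearMap.range (K₁.mkQ.prod K₂.mkQ) =
      LinearMap.ker ((K₁.liftQ g h₁).coprod (-K₂.liftQ g h₂)) := by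
  refine le_antisymm ?_ ?_
  · rintro _ ⟨p, rfl⟩
    simp
  · rintro ⟨x, y⟩ hxy
    obtain ⟨p, rfl⟩ := K₁.mkQ_surjective x
    obtain ⟨q, rfl⟩ := K₂.mkQ_surjective y
    have hpq : p - q ∈ K₁ ⊔ K₂ := hK (by simpa [sub_eq_add_neg] using hxy)
    obtain ⟨k₁, hk₁, k₂, hk₂, hk⟩ := mem_sup.mp hpq
    -- `p - k₁ = q + k₂` is congruent to `p` modulo `K₁` and to `q` modulo `K₂`
    refine ⟨p - k₁, Prod.ext ?_ ?_⟩
    · simpa using (Quotient.mk_eq_zero K₁).mpr hk₁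
    · refine (Quotient.eq K₂).mpr ?_
      convert hk₂ using 1
      rw [sub_right_comm, ← hk]
      abel

end Submodule

namespace LinearMap

variable {R M M' P : Type*} [Semiring R] [AddCommMonoid M] [Module R M] [AddCommMonoid M']
  [Module R M'] [AddCommMonoid P] [Module R P] (f : M × M' →ₗ[R] P)

theorem disjoint_range_comp_inl_range_comp_inr (hf : Function.Injective f) :
    Disjoint (range (f ∘ₗ inl R M M')) (range (f ∘ₗ inr R M M')) := by
  rw [range_comp, range_comp]
  exact Submodule.disjoint_map hf disjoint_inl_inr

theorem range_comp_inl_sup_range_comp_inr :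
    range (f ∘ₗ inl R M M') ⊔ range (f ∘ₗ inr R M M') = range f := by
  rw [range_comp, range_comp, ← Submodule.map_sup, sup_range_inl_inr, range_eq_map]

end LinearMap

theorem syzygy_summand_closed_general (R : Type) [CommRing R] (I : Ideal R)
    (X : ModuleCat.{0} R → Prop)
    (hproj : ∀ M : ModuleCat.{0} R, Module.Finite R M → Module.Projective R M → X M)
    (hsummand : ∀ M N : ModuleCat.{0} R, X N →
      (∃ (i : M →ₗ[R] N) (p : N →ₗ[R] M), p ∘ₗ i = LinearMap.id) → X M)
    (hext : ∀ (A Z B : ModuleCat.{0} R) (f : A →ₗ[R] Z) (g : Z →ₗ[R] B),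
      Function.Injective f → Function.Surjective g → LinearMap.range f = LinearMap.ker g →
      X A → X B → X Z)
    (A A' P B : ModuleCat.{0} R)
    (hPfin : Module.Finite R P) (hPproj : Module.Projective R P)
    (f : (A × A' : Type) →ₗ[R] P) (g : P →ₗ[R] B)
    (hf : Function.Injective f) (hg : Function.Surjective g)
    (hfg : LinearMap.range f = LinearMap.ker g)
    (hXB : X B) (hIB : ∀ a ∈ I, StablyAnn R B a) :
    ∃ (P' C : ModuleCat.{0} R), Module.Finite R P' ∧ Module.Projective R P' ∧
      ∃ (f' : A →ₗ[R] P') (g' : P' →ₗ[R] C),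
        Function.Injective f' ∧ Function.Surjective g' ∧
        LinearMap.range f' = LinearMap.ker g' ∧ X C ∧ ∀ a ∈ I, StablyAnn R C a := by
  set K₁ := LinearMap.range (f ∘ₗ LinearMap.inl R A A')
  set K₂ := LinearMap.range (f ∘ₗ LinearMap.inr R A A')
  have hK : K₁ ⊔ K₂ = LinearMap.ker g := (f.range_comp_inl_sup_range_comp_inr).trans hfg
  have h₁ : K₁ ≤ LinearMap.ker g := hK ▸ le_sup_left
  have h₂ : K₂ ≤ LinearMap.ker g := hK ▸ le_sup_right
  have hδ := Submodule.injective_mkQ_prod_mkQ (f.disjoint_range_comp_inl_range_comp_inr hf)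
  have hσ := Submodule.surjective_liftQ_coprod_neg_liftQ h₁ h₂ hg
  have hδσ := Submodule.range_mkQ_prod_mkQ_eq_ker h₁ h₂ hK.ge
  have hretract : LinearMap.fst R (P ⧸ K₁) (P ⧸ K₂) ∘ₗ LinearMap.inl R _ _ = LinearMap.id :=
    LinearMap.fst_comp_inl R _ _
  refine ⟨P, ModuleCat.of R (P ⧸ K₁), hPfin, hPproj, f ∘ₗ LinearMap.inl R A A', K₁.mkQ,
    hf.comp LinearMap.inl_injective, K₁.mkQ_surjective, K₁.ker_mkQ.symm, ?_, fun a ha => ?_⟩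
  · refine hsummand _ (ModuleCat.of R ((P ⧸ K₁) × (P ⧸ K₂))) ?_ ⟨_, _, hretract⟩
    exact hext P _ B _ _ hδ hσ hδσ (hproj P hPfin hPproj) hXB
  · exact ((hIB a ha).of_exact_of_projective _ _ hδ hσ hδσ).of_retract _ _ hretract

/-- The syzygy category of X ∩ mod_I(R) is closed under direct summands. -/
theorem syzygy_summand_closed (R : Type) [CommRing R] [IsNoetherianRing R] (I : Ideal R)
    (X : ModuleCat.{0} R → Prop)
    (hproj : ∀ M : ModuleCat.{0} R, Module.Finite R M → Module.Projective R M → X M)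
    (hsummand : ∀ M N : ModuleCat.{0} R, X N →
      (∃ (i : M →ₗ[R] N) (p : N →ₗ[R] M), p ∘ₗ i = LinearMap.id) → X M)
    (hext : ∀ (A Z B : ModuleCat.{0} R) (f : A →ₗ[R] Z) (g : Z →ₗ[R] B),
      Function.Injective f → Function.Surjective g → LinearMap.range f = LinearMap.ker g →
      X A → X B → X Z)
    (A A' P B : ModuleCat.{0} R)
    (hA : Module.Finite R A) (hA' : Module.Finite R A') (hB : Module.Finite R B)
    (hPfin : Module.Finite R P) (hPproj : Module.Projective R P)
    (f : (A × A' : Type) →ₗ[R] P) (g : P →ₗ[R] B)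
    (hf : Function.Injective f) (hg : Function.Surjective g)
    (hfg : LinearMap.range f = LinearMap.ker g)
    (hXB : X B) (hIB : ∀ a ∈ I, StablyAnn R B a) :
    ∃ (P' C : ModuleCat.{0} R), Module.Finite R P' ∧ Module.Projective R P' ∧
      ∃ (f' : A →ₗ[R] P') (g' : P' →ₗ[R] C),
        Function.Injective f' ∧ Function.Surjective g' ∧
        LinearMap.range f' = LinearMap.ker g' ∧ X C ∧ ∀ a ∈ I, StablyAnn R C a :=
  syzygy_summand_closed_general R I X hproj hsummand hext A A' P B hPfin hPproj f g hf hg hfg hXB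
    hIB
end
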